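/- arXiv:2209.07269 — 2 statements merged into one kernel-verified Lean document; each statement's English description precedes it below -/
import Mathlib

section
/- Let g : (0, 1/2] → (0, ∞) be continuous and define L(x) = ∫₀^x √(g(u)) du, assumed finite, with L strictly increasing. If x̃ : [0,1] → [0,1/2] is defined implicitly by L(x̃(s)) = s·L(1/2), then x̃ is differentiable on (0,1) and g(x̃(s))·(x̃'(s))² = L(1/2)² for all s ∈ (0,1), i.e., the protocol achieves constant excess-work rate and thus ∫₀^1 g(x̃(s)) x̃'(s)² ds = L(1/2)². -/
open Real Set intervalIntegral

/-!
Normalising `F = L / L(1/2)`, the protocol `x̃` is a right inverse of `F` on `[0,1]`, so by the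
inverse function theorem `x̃' = L(1/2) / L'(x̃) = L(1/2) / √(g ∘ x̃)`, which is the constant-speed
identity `g(x̃) x̃'² = L(1/2)²`; the integral is then that of a constant on `(0,1)`.
-/

theorem hasDerivAt_integral_of_continuousOn_Ioo {f : ℝ → ℝ} {a b y : ℝ}
    (hf : IntervalIntegrable f MeasureTheory.volume a b) (hcont : ContinuousOn f (Ioo a b))
    (hy : y ∈ Ioo a b) :
    HasDerivAt (fun x => ∫ u in a..x, f u) (f y) y := by
  refine integral_hasDerivAt_right (hf.mono_set ?_)
    (hcont.stronglyMeasurableAtFilter isOpen_Ioo y hy)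
    (hcont.continuousAt (isOpen_Ioo.mem_nhds hy))
  rw [uIcc_of_le hy.1.le, uIcc_of_le (hy.1.trans hy.2).le]
  exact Icc_subset_Icc_right hy.2.le

section RightInverse

variable {F x : ℝ → ℝ} {a b c d : ℝ}

theorem mapsTo_Ioo_of_leftInvOn (ha : F a = c) (hb : F b = d)
    (hmap : MapsTo x (Icc c d) (Icc a b)) (hinv : LeftInvOn F x (Icc c d)) :
    MapsTo x (Ioo c d) (Ioo a b) := by
  intro s hs
  have hs' : s ∈ Icc c d := Ioo_subset_Icc_self hs
  have hne_a : x s ≠ a := fun h => hs.1.ne' (by rw [← hinv hs', h, ha])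
  have hne_b : x s ≠ b := fun h => hs.2.ne (by rw [← hinv hs', h, hb])
  exact ⟨(hmap hs').1.lt_of_ne' hne_a, (hmap hs').2.lt_of_ne hne_b⟩

theorem strictMonoOn_of_leftInvOn (hF : MonotoneOn F (Icc a b))
    (hmap : MapsTo x (Icc c d) (Icc a b)) (hinv : LeftInvOn F x (Icc c d)) :
    StrictMonoOn x (Icc c d) := by
  intro s hs t ht hst
  by_contra! hle
  have := hF (hmap ht) (hmap hs) hle
  rw [hinv hs, hinv ht] at this
  exact hst.not_ge this

theorem Ioo_subset_image_of_leftInvOn (hF : StrictMonoOn F (Icc a b)) (ha : F a = c)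
    (hb : F b = d) (hmap : MapsTo x (Icc c d) (Icc a b)) (hinv : LeftInvOn F x (Icc c d)) :
    Ioo a b ⊆ x '' Ioo c d := by
  intro y hy
  have hab : a ≤ b := (hy.1.trans hy.2).le
  have hy' : y ∈ Icc a b := Ioo_subset_Icc_self hy
  have hFy : F y ∈ Ioo c d :=
    ⟨ha ▸ hF (left_mem_Icc.2 hab) hy' hy.1, hb ▸ hF hy' (right_mem_Icc.2 hab) hy.2⟩
  have hFy' : F y ∈ Icc c d := Ioo_subset_Icc_self hFy
  exact ⟨F y, hFy, hF.injOn (hmap hFy') hy' (hinv hFy')⟩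

theorem continuousAt_of_leftInvOn (hF : StrictMonoOn F (Icc a b)) (ha : F a = c)
    (hb : F b = d) (hmap : MapsTo x (Icc c d) (Icc a b)) (hinv : LeftInvOn F x (Icc c d))
    {s : ℝ} (hs : s ∈ Ioo c d) :
    ContinuousAt x s :=
  ((strictMonoOn_of_leftInvOn hF.monotoneOn hmap hinv).mono
    Ioo_subset_Icc_self).continuousAt_of_image_mem_nhds (isOpen_Ioo.mem_nhds hs) <|
    Filter.mem_of_superset (isOpen_Ioo.mem_nhds (mapsTo_Ioo_of_leftInvOn ha hb hmap hinv hs))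
      (Ioo_subset_image_of_leftInvOn hF ha hb hmap hinv)

theorem hasDerivAt_of_leftInvOn (hF : StrictMonoOn F (Icc a b)) (ha : F a = c)
    (hb : F b = d) (hmap : MapsTo x (Icc c d) (Icc a b)) (hinv : LeftInvOn F x (Icc c d))
    {s F' : ℝ} (hs : s ∈ Ioo c d) (hF' : HasDerivAt F F' (x s)) (hF'0 : F' ≠ 0) :
    HasDerivAt x F'⁻¹ s := by
  refine hF'.of_local_left_inverse (continuousAt_of_leftInvOn hF ha hb hmap hinv hs) hF'0 ?_
  filter_upwards [isOpen_Ioo.mem_nhds hs] with t ht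
  exact hinv (Ioo_subset_Icc_self ht)

end RightInverse

/-- Constant-thermodynamic-speed protocols are optimal: if `L(x) = ∫₀^x √g` is
strictly increasing and `x̃` is defined implicitly by `L(x̃(s)) = s·L(1/2)`, then
`x̃` is differentiable on `(0,1)` with `g(x̃(s))·x̃'(s)² = L(1/2)²`, and hence
`∫₀^1 g(x̃(s)) x̃'(s)² ds = L(1/2)²`. -/
theorem constant_speed_optimal (g : ℝ → ℝ)
    (hg : ContinuousOn g (Ioc 0 (1/2)))
    (hgpos : ∀ u ∈ Ioc (0:ℝ) (1/2), 0 < g u)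
    (L : ℝ → ℝ) (hL : ∀ x, L x = ∫ u in (0:ℝ)..x, Real.sqrt (g u))
    (hfin : IntervalIntegrable (fun u => Real.sqrt (g u)) MeasureTheory.volume 0 (1/2))
    (hmono : StrictMonoOn L (Icc 0 (1/2)))
    (x : ℝ → ℝ) (hmap : ∀ s ∈ Icc (0:ℝ) 1, x s ∈ Icc (0:ℝ) (1/2))
    (himp : ∀ s ∈ Icc (0:ℝ) 1, L (x s) = s * L (1/2)) :
    (∀ s ∈ Ioo (0:ℝ) 1, DifferentiableAt ℝ x s ∧
      g (x s) * (deriv x s)^2 = (L (1/2))^2) ∧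
    (∫ s in (0:ℝ)..1, g (x s) * (deriv x s)^2) = (L (1/2))^2 := by
  set C := L (1/2)
  have hL0 : L 0 = 0 := by simp [hL]
  have hC : 0 < C := hL0 ▸ hmono (by norm_num) (by norm_num) (by norm_num)
  let F : ℝ → ℝ := fun u => L u / C
  have hF : StrictMonoOn F (Icc 0 (1/2)) :=
    fun u hu v hv huv => div_lt_div_of_pos_right (hmono hu hv huv) hC
  have hF0 : F 0 = 0 := by simp only [F, hL0, zero_div]
  have hF1 : F (1/2) = 1 := div_self hC.ne'
  have hinv : LeftInvOn F x (Icc 0 1) := fun s hs => by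
    simp only [F, himp s hs, mul_div_cancel_right₀ _ hC.ne']
  have pointwise (s : ℝ) (hs : s ∈ Ioo 0 1) :
      DifferentiableAt ℝ x s ∧ g (x s) * (deriv x s)^2 = C^2 := by
    have hxs := mapsTo_Ioo_of_leftInvOn hF0 hF1 hmap hinv hs
    have hgx : 0 < g (x s) := hgpos _ (Ioo_subset_Ioc_self hxs)
    have hsqrt : ContinuousOn (fun u => √(g u)) (Ioo 0 (1/2)) :=
      continuous_sqrt.comp_continuousOn (hg.mono Ioo_subset_Ioc_self)
    have hL' : HasDerivAt L (√(g (x s))) (x s) :=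
      funext hL ▸ hasDerivAt_integral_of_continuousOn_Ioo hfin hsqrt hxs
    have hx' := hasDerivAt_of_leftInvOn hF hF0 hF1 hmap hinv hs
      (hL'.div_const C) (div_ne_zero (sqrt_pos.2 hgx).ne' hC.ne')
    refine ⟨hx'.differentiableAt, ?_⟩
    rw [hx'.deriv, inv_div, div_pow, sq_sqrt hgx.le]
    field_simp
  refine ⟨pointwise, ?_⟩
  rw [integral_congr_Ioo_of_le zero_le_one fun s hs => (pointwise s hs).2]
  simp
end

section
/- For τ_p, τ_h > 0, the closed-form length L_sym = 2[√(2τ_p + (2/3)τ_h) − √(τ_p + (2/3)τ_h)] − 2√(2τ_h/3)[arcsinh(√(τ_h/(3τ_p))) − arcsinh(√(2τ_h/(3τ_p)))] is strictly positive. -/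
open Real

/-- The total thermodynamic length of the symmetric geodesic path (Eq. 13) is
strictly positive for `τ_p, τ_h > 0`. -/
theorem length_sym_pos (τp τh : ℝ) (hτp : 0 < τp) (hτh : 0 < τh) :
    0 < 2 * (Real.sqrt (2 * τp + (2/3) * τh) - Real.sqrt (τp + (2/3) * τh)) -
        2 * Real.sqrt (2 * τh / 3) *
          (Real.arsinh (Real.sqrt (τh / (3 * τp))) -
           Real.arsinh (Real.sqrt (2 * τh / (3 * τp)))) := by
  have h1 : Real.sqrt (τp + (2/3) * τh) < Real.sqrt (2 * τp + (2/3) * τh) := by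
    apply Real.sqrt_lt_sqrt (by positivity); linarith
  have h2 : Real.arsinh (Real.sqrt (τh / (3 * τp))) <
      Real.arsinh (Real.sqrt (2 * τh / (3 * τp))) := by
    apply Real.arsinh_lt_arsinh.mpr
    apply Real.sqrt_lt_sqrt (by positivity)
    rw [div_lt_div_iff₀ (by positivity) (by positivity)]
    nlinarith
  have h3 : (0:ℝ) < Real.sqrt (2 * τh / 3) := Real.sqrt_pos.mpr (by positivity)
  nlinarith
end
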